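/- Define ū : [0,L] → ℝ by ū(x) = u(x) for x ∈ [0, ξ̄) and ū(x) = 0 for x ∈ [ξ̄, L], and D : [0,L] → ℝ by D(x) = u'(x) for x ∈ [0, ξ̄) and D(x) = 0 for x ∈ [ξ̄, L] (so D is the derivative of ū, which is continuously differentiable since u(ξ̄) = u'(ξ̄) = 0). Then ū solves the variational inequality: for every continuously differentiable v : [0,L] → ℝ with v(0) = 0, v(L) = 0 and v(x) ≥ 0 on [0,L], one has ∫₀^L D(x)(v'(x) − D(x)) dx ≥ ∫₀^L f(x)(v(x) − ū(x)) dx. -/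

import Mathlib

/-!
On `[0, ξ]` the function `u` solves `-u'' = f` with `u(0) = 0` and `u'(ξ) = 0`, so integrating
by parts against `v - u` gives `∫₀^ξ u' (v' - u') = ∫₀^ξ f (v - u)`: the boundary term vanishes
at `0` because `v(0) = u(0) = 0` and at `ξ` because `u'(ξ) = 0`. On `[ξ, L]` both `D` and `ū`
vanish, so the inequality reduces to `∫_ξ^L f v ≤ 0`, which holds since `f < 0` there
(`ξ > L/2`) and `v ≥ 0`.
-/

open Set intervalIntegral
open MeasureTheory (volume)

section Primitive

variable {f : ℝ → ℝ} {a b x : ℝ}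

theorem intervalIntegrable_of_continuousOn_Icc (hf : ContinuousOn f (Icc a b))
    (hx : x ∈ Icc a b) : IntervalIntegrable f volume a x :=
  (hf.mono (Icc_subset_Icc le_rfl hx.2)).intervalIntegrable_of_Icc hx.1

theorem continuousOn_integral_of_continuousOn_Icc (hf : ContinuousOn f (Icc a b)) (hab : a ≤ b) :
    ContinuousOn (fun y => ∫ t in a..y, f t) (Icc a b) := by
  have hfi := hf.integrableOn_Icc (μ := volume)
  rw [← uIcc_of_le hab] at hfi ⊢
  exact continuousOn_primitive_interval hfi

theorem hasDerivAt_integral_of_continuousOn_Icc (hf : ContinuousOn f (Icc a b))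
    (hx : x ∈ Ioo a b) : HasDerivAt (fun y => ∫ t in a..y, f t) (f x) x :=
  integral_hasDerivAt_right (intervalIntegrable_of_continuousOn_Icc hf (Ioo_subset_Icc_self hx))
    ((hf.mono Ioo_subset_Icc_self).stronglyMeasurableAtFilter isOpen_Ioo x hx)
    (hf.continuousAt (Icc_mem_nhds hx.1 hx.2))

theorem integral_sub_mul_eq (hf : IntervalIntegrable f volume a x) :
    ∫ z in a..x, (x - z) * f z = x * (∫ z in a..x, f z) - ∫ z in a..x, z * f z := by
  simp_rw [sub_mul]
  rw [integral_sub (hf.const_mul x) (hf.continuousOn_mul (g := fun z => z) continuousOn_id),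
    integral_const_mul]

theorem continuousOn_integral_sub_mul (hf : ContinuousOn f (Icc a b)) (hab : a ≤ b) :
    ContinuousOn (fun y => ∫ z in a..y, (y - z) * f z) (Icc a b) :=
  ((continuousOn_id.mul (continuousOn_integral_of_continuousOn_Icc hf hab)).sub
      (continuousOn_integral_of_continuousOn_Icc (continuousOn_id.mul hf) hab)).congr
    fun _ hy => integral_sub_mul_eq (intervalIntegrable_of_continuousOn_Icc hf hy)

theorem hasDerivAt_integral_sub_mul (hf : ContinuousOn f (Icc a b)) (hx : x ∈ Ioo a b) :
    HasDerivAt (fun y => ∫ z in a..y, (y - z) * f z) (∫ z in a..x, f z) x := by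
  have hderiv := ((hasDerivAt_id x).mul (hasDerivAt_integral_of_continuousOn_Icc hf hx)).sub
    (hasDerivAt_integral_of_continuousOn_Icc (continuousOn_id.mul hf) hx)
  refine (hderiv.congr_of_eventuallyEq ?_).congr_deriv (by simp)
  filter_upwards [Ioo_mem_nhds hx.1 hx.2] with y hy
  exact integral_sub_mul_eq (intervalIntegrable_of_continuousOn_Icc hf (Ioo_subset_Icc_self hy))

end Primitive

/-- Weak form of `-u'' = f` with `w = u'`, tested against `v - u`. -/
theorem integral_deriv_mul_deriv_sub {u w f v v' : ℝ → ℝ} {a b : ℝ} (hab : a ≤ b)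
    (hu : ContinuousOn u (Icc a b)) (hw : ContinuousOn w (Icc a b))
    (hv : ContinuousOn v (Icc a b)) (hfi : IntervalIntegrable f volume a b)
    (hv'i : IntervalIntegrable v' volume a b) (hu' : ∀ x ∈ Ioo a b, HasDerivAt u (w x) x)
    (hw' : ∀ x ∈ Ioo a b, HasDerivAt w (-f x) x) (hv' : ∀ x ∈ Ioo a b, HasDerivAt v (v' x) x) :
    ∫ x in a..b, w x * (v' x - w x)
      = w b * (v b - u b) - w a * (v a - u a) + ∫ x in a..b, f x * (v x - u x) := by
  have hIoo : Ioo (min a b) (max a b) = Ioo a b := by rw [min_eq_left hab, max_eq_right hab]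
  rw [← uIcc_of_le hab] at hu hw hv
  rw [integral_mul_deriv_eq_deriv_mul_of_hasDerivAt hw (hv.sub hu) (fun x hx => hw' x (hIoo ▸ hx))
    (fun x hx => (hv' x (hIoo ▸ hx)).sub (hu' x (hIoo ▸ hx))) hfi.neg
    (hv'i.sub hw.intervalIntegrable)]
  simp only [Pi.sub_apply, neg_mul, integral_neg]
  ring

theorem integral_eq_add_of_eqOn_Ioo {F g h : ℝ → ℝ} {a b c : ℝ} (hac : a ≤ c) (hcb : c ≤ b)
    (hg : IntervalIntegrable g volume a c) (hh : IntervalIntegrable h volume c b)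
    (hFg : EqOn F g (Ioo a c)) (hFh : EqOn F h (Ioo c b)) :
    ∫ x in a..b, F x = (∫ x in a..c, g x) + ∫ x in c..b, h x := by
  rw [← integral_add_adjacent_intervals (hg.congr_uIoo (uIoo_of_le hac ▸ hFg.symm))
      (hh.congr_uIoo (uIoo_of_le hcb ▸ hFh.symm)),
    integral_congr_Ioo_of_le hac hFg, integral_congr_Ioo_of_le hcb hFh]

section ExplicitSolution

variable {f u : ℝ → ℝ} {C c : ℝ}

theorem hasDerivAt_of_eq_mul_sub_integral_sub_mul (hf : ContinuousOn f (Icc 0 c))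
    (hu : ∀ x, u x = x * C - ∫ z in (0:ℝ)..x, (x - z) * f z) {x : ℝ} (hx : x ∈ Ioo 0 c) :
    HasDerivAt u (C - ∫ t in (0:ℝ)..x, f t) x := by
  rw [funext hu]
  exact (((hasDerivAt_id x).mul_const C).sub (hasDerivAt_integral_sub_mul hf hx)).congr_deriv
    (by rw [one_mul])

theorem continuousOn_of_eq_mul_sub_integral_sub_mul (hf : ContinuousOn f (Icc 0 c)) (hc : 0 ≤ c)
    (hu : ∀ x, u x = x * C - ∫ z in (0:ℝ)..x, (x - z) * f z) : ContinuousOn u (Icc 0 c) := by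
  rw [funext hu]
  exact (continuousOn_id.mul continuousOn_const).sub (continuousOn_integral_sub_mul hf hc)

theorem integral_truncated_deriv_mul_sub_eq {D v v' : ℝ → ℝ} {b : ℝ} (hc : 0 ≤ c) (hcb : c ≤ b)
    (hf : ContinuousOn f (Icc 0 c))
    (hu : ∀ x, u x = x * (∫ t in (0:ℝ)..c, f t) - ∫ z in (0:ℝ)..x, (x - z) * f z)
    (hD : ∀ x, D x = if x < c then deriv u x else 0) (hv : ContinuousOn v (Icc 0 c))
    (hv' : ∀ x ∈ Ioo 0 c, HasDerivAt v (v' x) x) (hv'i : IntervalIntegrable v' volume 0 c)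
    (hv0 : v 0 = 0) :
    ∫ x in (0:ℝ)..b, D x * (v' x - D x) = ∫ x in (0:ℝ)..c, f x * (v x - u x) := by
  set w : ℝ → ℝ := fun x => (∫ t in (0:ℝ)..c, f t) - ∫ t in (0:ℝ)..x, f t with hw
  have hu' : ∀ x ∈ Ioo 0 c, HasDerivAt u (w x) x := fun x hx =>
    hasDerivAt_of_eq_mul_sub_integral_sub_mul hf hu hx
  have hw' : ∀ x ∈ Ioo 0 c, HasDerivAt w (-f x) x := fun x hx =>
    ((hasDerivAt_const x _).sub (hasDerivAt_integral_of_continuousOn_Icc hf hx)).congr_deriv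
      (zero_sub _)
  have hw_cont : ContinuousOn w (Icc 0 c) :=
    continuousOn_const.sub (continuousOn_integral_of_continuousOn_Icc hf hc)
  have hw_int : IntervalIntegrable (fun x => w x * (v' x - w x)) volume 0 c :=
    (hv'i.sub (hw_cont.intervalIntegrable_of_Icc hc)).continuousOn_mul
      (uIcc_of_le hc ▸ hw_cont)
  rw [integral_eq_add_of_eqOn_Ioo hc hcb hw_int intervalIntegrable_const (h := fun _ => 0)
      (fun x hx => by simp only [hD, if_pos hx.2, (hu' x hx).deriv])
      (fun x hx => by simp only [hD, if_neg (not_lt.2 hx.1.le), zero_mul]),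
    integral_zero, add_zero, integral_deriv_mul_deriv_sub hc
      (continuousOn_of_eq_mul_sub_integral_sub_mul hf hc hu) hw_cont hv
      (hf.intervalIntegrable_of_Icc hc) hv'i hu' hw' hv']
  simp [hw, hv0, hu]

end ExplicitSolution

theorem truncated_solution_solves_variational_inequality_general
    (L : ℝ) (f : ℝ → ℝ)
    (hf : ContinuousOn f (Set.Icc 0 L))
    (hneg : ∀ x, L / 2 < x → x ≤ L → f x < 0)
    (ξ : ℝ) (hξ : ξ ∈ Set.Ioo (L / 2) L)
    (u : ℝ → ℝ)
    (hu : ∀ x : ℝ, u x = x * (∫ t in (0:ℝ)..ξ, f t) - ∫ z in (0:ℝ)..x, (x - z) * f z)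
    (ubar D : ℝ → ℝ)
    (hubar : ∀ x : ℝ, ubar x = if x < ξ then u x else 0)
    (hD : ∀ x : ℝ, D x = if x < ξ then deriv u x else 0) :
    ∀ v v' : ℝ → ℝ,
      (∀ x ∈ Set.Icc (0 : ℝ) L, HasDerivWithinAt v (v' x) (Set.Icc (0 : ℝ) L) x) →
      ContinuousOn v' (Set.Icc 0 L) →
      v 0 = 0 → v L = 0 → (∀ x ∈ Set.Icc (0 : ℝ) L, 0 ≤ v x) →
      (∫ x in (0:ℝ)..L, D x * (v' x - D x)) ≥ ∫ x in (0:ℝ)..L, f x * (v x - ubar x) := by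
  intro v v' hv hv' hv0 _ hv_nonneg
  obtain ⟨hξ_half, hξL⟩ := hξ
  have hξ0 : 0 < ξ := by linarith
  have hIcc : Icc 0 ξ ⊆ Icc 0 L := Icc_subset_Icc le_rfl hξL.le
  have hIcc' : Icc ξ L ⊆ Icc 0 L := Icc_subset_Icc hξ0.le le_rfl
  have hfξ := hf.mono hIcc
  have hv_cont : ContinuousOn v (Icc 0 L) := fun x hx => (hv x hx).continuousWithinAt
  have hfv_int : IntervalIntegrable (fun x => f x * v x) volume ξ L :=
    ((hf.mono hIcc').mul (hv_cont.mono hIcc')).intervalIntegrable_of_Icc hξL.le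
  have hlhs : ∫ x in (0:ℝ)..L, D x * (v' x - D x) = ∫ x in (0:ℝ)..ξ, f x * (v x - u x) :=
    integral_truncated_deriv_mul_sub_eq hξ0.le hξL.le hfξ hu hD (hv_cont.mono hIcc)
      (fun x hx => (hv x (hIcc (Ioo_subset_Icc_self hx))).hasDerivAt
        (Icc_mem_nhds hx.1 (hx.2.trans hξL)))
      ((hv'.mono hIcc).intervalIntegrable_of_Icc hξ0.le) hv0
  have hrhs : ∫ x in (0:ℝ)..L, f x * (v x - ubar x)
      = (∫ x in (0:ℝ)..ξ, f x * (v x - u x)) + ∫ x in ξ..L, f x * v x :=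
    integral_eq_add_of_eqOn_Ioo hξ0.le hξL.le
      ((hfξ.mul ((hv_cont.mono hIcc).sub (continuousOn_of_eq_mul_sub_integral_sub_mul hfξ hξ0.le
        hu))).intervalIntegrable_of_Icc hξ0.le)
      hfv_int (fun x hx => by simp only [hubar, if_pos hx.2])
      (fun x hx => by simp only [hubar, if_neg (not_lt.2 hx.1.le), sub_zero])
  have htail : ∫ x in ξ..L, f x * v x ≤ 0 := by
    simpa using integral_mono_on hξL.le hfv_int intervalIntegrable_const (g := fun _ => 0)
      fun x hx => mul_nonpos_of_nonpos_of_nonneg (hneg x (hξ_half.trans_le hx.1) hx.2).le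
        (hv_nonneg x (hIcc' hx))
  linarith

/-- the truncated solution `ū` (equal to `u` on `[0,ξ̄)` and to `0` on
`[ξ̄,L]`), with derivative `D` (equal to `u'` on `[0,ξ̄)` and to `0` on `[ξ̄,L]`),
solves the variational inequality of the cavitated long bearing: for every
continuously differentiable `v` with `v(0) = v(L) = 0` and `v ≥ 0` on `[0,L]`,
`∫₀^L D (v' − D) ≥ ∫₀^L f (v − ū)`. -/
theorem truncated_solution_solves_variational_inequality
    (L : ℝ) (hL : 0 < L) (f : ℝ → ℝ)
    (hf : ContinuousOn f (Set.Icc 0 L))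
    (hpos : ∀ x, 0 ≤ x → x < L / 2 → 0 < f x)
    (hneg : ∀ x, L / 2 < x → x ≤ L → f x < 0)
    (hanti : ∀ x ∈ Set.Icc (0 : ℝ) L, f (L - x) = -f x)
    (ξ : ℝ) (hξ : ξ ∈ Set.Ioo (L / 2) L)
    (hF : (∫ z in (0:ℝ)..ξ, z * f z) = 0)
    (u : ℝ → ℝ)
    (hu : ∀ x : ℝ, u x = x * (∫ t in (0:ℝ)..ξ, f t) - ∫ z in (0:ℝ)..x, (x - z) * f z)
    (ubar D : ℝ → ℝ)
    (hubar : ∀ x : ℝ, ubar x = if x < ξ then u x else 0)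
    (hD : ∀ x : ℝ, D x = if x < ξ then deriv u x else 0) :
    ∀ v v' : ℝ → ℝ,
      (∀ x ∈ Set.Icc (0 : ℝ) L, HasDerivWithinAt v (v' x) (Set.Icc (0 : ℝ) L) x) →
      ContinuousOn v' (Set.Icc 0 L) →
      v 0 = 0 → v L = 0 → (∀ x ∈ Set.Icc (0 : ℝ) L, 0 ≤ v x) →
      (∫ x in (0:ℝ)..L, D x * (v' x - D x)) ≥ ∫ x in (0:ℝ)..L, f x * (v x - ubar x) :=
  truncated_solution_solves_variational_inequality_general L f hf hneg ξ hξ u hu ubar D hubar hD
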